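/- arXiv:2403.18127 — 6 statements merged into one kernel-verified Lean document; each statement's English description precedes it below -/
import Mathlib

section
/- Let d ≥ 1 and t ≥ 1. Let μ(x) = 1/(2 + 2·e^{−x}), m(x) = ∫_0^x μ(s) ds, and let the data be x_i = c_i·𝟙 ∈ ℝ^d with c_i ∈ (0,1] and y_i ∈ (1/2, 1] for i = 1,…,t. Define H(θ) = ∑_{i=1}^t ( y_i·⟨x_i, θ⟩ − m(⟨x_i, θ⟩) ). Then H(s·𝟙) → +∞ as s → +∞; in particular H is unbounded above on ℝ^d and there exists no θ̂ ∈ ℝ^d with H(θ) ≤ H(θ̂) for all θ ∈ ℝ^d. -/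
open Filter

/-- with link μ(x)=1/(2+2e^{-x}), data x_i = c_i·𝟙, c_i ∈ (0,1],
y_i ∈ (1/2,1], the pseudo log-likelihood H(s·𝟙) → +∞ as s → +∞; in particular H
is unbounded above and has no maximizer. -/
theorem stmt_1 (d t : ℕ) (hd : 1 ≤ d) (ht : 1 ≤ t)
    (μ m : ℝ → ℝ) (hμ : μ = fun x : ℝ => 1 / (2 + 2 * Real.exp (-x)))
    (hm : ∀ x : ℝ, m x = ∫ s in (0:ℝ)..x, μ s)
    (c : Fin t → ℝ) (hc : ∀ i, c i ∈ Set.Ioc (0:ℝ) 1)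
    (x : Fin t → Fin d → ℝ) (hx : ∀ i k, x i k = c i)
    (y : Fin t → ℝ) (hy : ∀ i, y i ∈ Set.Ioc (1/2 : ℝ) 1)
    (H : (Fin d → ℝ) → ℝ)
    (hH : ∀ θ : Fin d → ℝ,
      H θ = ∑ i, (y i * (∑ k, x i k * θ k) - m (∑ k, x i k * θ k))) :
    Tendsto (fun s : ℝ => H (fun _ => s)) atTop atTop ∧
    ¬ BddAbove (Set.range H) ∧
    ¬ ∃ θhat : Fin d → ℝ, ∀ θ : Fin d → ℝ, H θ ≤ H θhat := by
  have hμcont : Continuous μ := by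
    rw [hμ]
    apply Continuous.div continuous_const
    · continuity
    · intro s
      have := Real.exp_pos (-s)
      positivity
  have hμle : ∀ s : ℝ, μ s ≤ 1 / 2 := by
    intro s
    rw [hμ]
    have h1 : (0:ℝ) < 2 := by norm_num
    have h2 : (2:ℝ) ≤ 2 + 2 * Real.exp (-s) := by
      have := (Real.exp_pos (-s)).le
      linarith
    exact one_div_le_one_div_of_le h1 h2
  have hmle : ∀ z : ℝ, 0 ≤ z → m z ≤ z / 2 := by
    intro z hz
    rw [hm]
    have : (∫ s in (0:ℝ)..z, μ s) ≤ ∫ s in (0:ℝ)..z, (1/2 : ℝ) := by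
      apply intervalIntegral.integral_mono_on hz
      · exact (hμcont.intervalIntegrable _ _)
      · exact intervalIntegrable_const
      · intro s _; exact hμle s
    simpa using this.trans_eq (by simp [mul_comm, div_eq_mul_inv])
  -- inner product simplification
  have hin : ∀ (i : Fin t) (s : ℝ), (∑ k, x i k * s) = (d : ℝ) * c i * s := by
    intro i s
    simp [hx, mul_comm, mul_assoc]
  set K : ℝ := ∑ i, (y i - 1/2) * ((d : ℝ) * c i) with hK
  have hKpos : 0 < K := by
    rw [hK]
    apply Finset.sum_pos
    · intro i _
      have h1 := (hy i).1
      have h2 := (hc i).1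
      have hd' : (0:ℝ) < d := by exact_mod_cast hd
      have : 0 < y i - 1/2 := by linarith
      positivity
    · have : Nonempty (Fin t) := ⟨⟨0, ht⟩⟩
      exact Finset.univ_nonempty
  have hbound : ∀ s : ℝ, 0 ≤ s → K * s ≤ H (fun _ => s) := by
    intro s hs
    rw [hH, hK, Finset.sum_mul]
    apply Finset.sum_le_sum
    intro i _
    rw [hin i s]
    have h2 := (hc i).1
    have hd' : (0:ℝ) < d := by exact_mod_cast hd
    have hz : 0 ≤ (d : ℝ) * c i * s := by positivity
    have := hmle _ hz
    nlinarith
  have htend : Tendsto (fun s : ℝ => H (fun _ => s)) atTop atTop := by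
    apply tendsto_atTop_mono' atTop (Eventually.mono (eventually_ge_atTop 0)
      (fun s hs => hbound s hs))
    exact Tendsto.const_mul_atTop hKpos tendsto_id
  refine ⟨htend, ?_, ?_⟩
  · intro hbdd
    obtain ⟨B, hB⟩ := hbdd
    obtain ⟨s, hs⟩ := (htend.eventually (eventually_gt_atTop B)).exists
    exact absurd (hB (Set.mem_range_self _)) (not_le.mpr hs)
  · rintro ⟨θhat, hθ⟩
    obtain ⟨s, hs⟩ := (htend.eventually (eventually_gt_atTop (H θhat))).exists
    exact absurd (hθ _) (not_le.mpr hs)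
end

section
/- Let μ : ℝ → ℝ be twice differentiable, let x* ∈ ℝ, and set A := μ'(x*) > 0 and B := μ''(x*) < 0. Define g : ℝ → ℝ by g(x) = μ(x) for x ≤ x*, and g(x) = μ(x*) + (A²/B)·ln(−A/B) − (A²/B)·ln(x − x* − A/B) for x > x*. Then g is differentiable at every point of ℝ; its derivative satisfies g'(x) = μ'(x) for x ≤ x* and g'(x) = −A²/( B·(x − x* − A/B) ) for x ≥ x*; in particular g'(x*) = μ'(x*) = A and g is continuous on ℝ. -/
/-! Both branches are differentiable on their closed half-lines, they take the value `μ x*` at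
`x*`, and the derivative `-A² / (B (x - x* - A/B))` of the logarithmic branch equals `A` at
`x*`; one-sided derivatives that agree glue to a two-sided one. -/

open Set

theorem hasDerivAt_ite_le {F : Type*} [NormedAddCommGroup F] [NormedSpace ℝ F]
    {f₁ f₂ f₁' f₂' : ℝ → F} {a : ℝ}
    (h₁ : ∀ y ≤ a, HasDerivAt f₁ (f₁' y) y) (h₂ : ∀ y ≥ a, HasDerivAt f₂ (f₂' y) y)
    (hf : f₁ a = f₂ a) (hf' : f₁' a = f₂' a) (x : ℝ) :
    HasDerivAt (fun y => if y ≤ a then f₁ y else f₂ y) (if x ≤ a then f₁' x else f₂' x) x := by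
  rcases lt_trichotomy x a with hlt | rfl | hgt
  · rw [if_pos hlt.le]
    refine (h₁ x hlt.le).congr_of_eventuallyEq ?_
    filter_upwards [Iio_mem_nhds hlt] with y hy using if_pos hy.le
  · rw [if_pos le_rfl]
    have hleft : HasDerivWithinAt (fun y => if y ≤ x then f₁ y else f₂ y) (f₁' x) (Iic x) x :=
      (h₁ x le_rfl).hasDerivWithinAt.congr (fun y hy => if_pos hy) (if_pos le_rfl)
    have hright : HasDerivWithinAt (fun y => if y ≤ x then f₁ y else f₂ y) (f₁' x) (Ici x) x := by
      rw [hf']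
      refine (h₂ x le_rfl).hasDerivWithinAt.congr (fun y hy => ?_) (by rw [if_pos le_rfl, hf])
      split_ifs with hyx
      · rw [le_antisymm hyx hy, hf]
      · rfl
    simpa only [Iic_union_Ici, hasDerivWithinAt_univ] using hleft.union hright
  · rw [if_neg hgt.not_ge]
    refine (h₂ x hgt.le).congr_of_eventuallyEq ?_
    filter_upwards [Ioi_mem_nhds hgt] with y hy using if_neg hy.not_ge

theorem hasDerivAt_const_sub_mul_log_sub (c k d : ℝ) {x : ℝ} (hx : x - d ≠ 0) :
    HasDerivAt (fun y => c - k * Real.log (y - d)) (-(k / (x - d))) x := by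
  have hlog := ((hasDerivAt_id x).sub_const d).log hx
  simpa [div_eq_mul_inv] using (hlog.const_mul k).const_sub c

theorem stmt_7_general (μ μ' : ℝ → ℝ)
    (hμd : ∀ x, HasDerivAt μ (μ' x) x)
    (xs A B : ℝ) (hA : A = μ' xs)
    (hApos : 0 < A) (hBneg : B < 0)
    (g : ℝ → ℝ)
    (hg : ∀ x, g x = if x ≤ xs then μ x
      else μ xs + (A^2 / B) * Real.log (-A / B)
        - (A^2 / B) * Real.log (x - xs - A / B)) :
    ∃ g' : ℝ → ℝ,
      (∀ x, HasDerivAt g (g' x) x) ∧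
      (∀ x ≤ xs, g' x = μ' x) ∧
      (∀ x ≥ xs, g' x = -A^2 / (B * (x - xs - A / B))) ∧
      g' xs = A ∧
      Continuous g := by
  have hright : ∀ x ≥ xs, HasDerivAt
      (fun y => μ xs + (A^2 / B) * Real.log (-A / B) - (A^2 / B) * Real.log (y - xs - A / B))
      (-A ^ 2 / (B * (x - xs - A / B))) x := by
    intro x hx
    have hpos : 0 < x - (xs + A / B) := by
      have : A / B < 0 := div_neg_of_pos_of_neg hApos hBneg
      linarith
    convert hasDerivAt_const_sub_mul_log_sub (μ xs + (A^2 / B) * Real.log (-A / B)) (A ^ 2 / B)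
      (xs + A / B) hpos.ne' using 1
    · simp only [sub_sub]
    · rw [sub_sub, neg_div, div_div]
  have hright_xs : -A ^ 2 / (B * (xs - xs - A / B)) = A := by
    rw [sub_self, zero_sub, mul_neg, mul_div_cancel₀ _ hBneg.ne, neg_div_neg_eq, sq,
      mul_div_cancel_right₀ _ hApos.ne']
  have hderiv := hasDerivAt_ite_le (fun y _ => hμd y) hright
    (by rw [sub_self, zero_sub, neg_div, add_sub_cancel_right]) (hA ▸ hright_xs.symm)
  rw [← funext hg] at hderiv
  refine ⟨_, hderiv, fun x hx => if_pos hx, fun x hx => ?_, by rw [if_pos le_rfl, hA], ?_⟩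
  · split_ifs with hxs
    · rw [le_antisymm hxs hx, ← hA, hright_xs]
    · rfl
  · exact continuous_iff_continuousAt.2 fun x => (hderiv x).continuousAt

/-- the upper log-extension g of μ beyond x* (with A = μ'(x*) > 0 and
B = μ''(x*) < 0) is differentiable everywhere, with g' = μ' on (-∞, x*] and
g'(x) = −A²/(B(x − x* − A/B)) on [x*, ∞); in particular g'(x*) = A and g is
continuous. -/
theorem stmt_7 (μ μ' μ'' : ℝ → ℝ)
    (hμd : ∀ x, HasDerivAt μ (μ' x) x)
    (hμd' : ∀ x, HasDerivAt μ' (μ'' x) x)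
    (xs A B : ℝ) (hA : A = μ' xs) (hB : B = μ'' xs)
    (hApos : 0 < A) (hBneg : B < 0)
    (g : ℝ → ℝ)
    (hg : ∀ x, g x = if x ≤ xs then μ x
      else μ xs + (A^2 / B) * Real.log (-A / B)
        - (A^2 / B) * Real.log (x - xs - A / B)) :
    ∃ g' : ℝ → ℝ,
      (∀ x, HasDerivAt g (g' x) x) ∧
      (∀ x ≤ xs, g' x = μ' x) ∧
      (∀ x ≥ xs, g' x = -A^2 / (B * (x - xs - A / B))) ∧
      g' xs = A ∧
      Continuous g :=
  stmt_7_general μ μ' hμd xs A B hA hApos hBneg g hg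
end

section
/- Let g : ℝ → ℝ be twice differentiable, let x** ∈ ℝ, and set A := g'(x**) > 0 and B := g''(x**) > 0. Define h : ℝ → ℝ by h(x) = g(x) for x ≥ x**, and h(x) = g(x**) + (A²/B)·ln(A/B) − (A²/B)·ln(x** + A/B − x) for x < x**. Then h is twice differentiable at every point of ℝ with h'(x) = g'(x) for x ≥ x** and h'(x) = (A²/B)/(x** + A/B − x) for x ≤ x**, and h''(x) = g''(x) for x ≥ x** and h''(x) = (A²/B)/(x** + A/B − x)² for x ≤ x**; moreover for all x ≤ x**, 0 < h'(x) ≤ A and 0 < h''(x) ≤ B, and h(x) → −∞ as x → −∞. -/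
open Filter

/-- the lower log-extension h of g below x** (with A = g'(x**) > 0 and
B = g''(x**) > 0) is twice differentiable everywhere with the stated first and second
derivatives, satisfies 0 < h' ≤ A and 0 < h'' ≤ B on (-∞, x**], and h(x) → −∞ as
x → −∞. -/
theorem stmt_10 (g g' g'' : ℝ → ℝ)
    (hgd : ∀ x, HasDerivAt g (g' x) x)
    (hgd' : ∀ x, HasDerivAt g' (g'' x) x)
    (xss A B : ℝ) (hA : A = g' xss) (hB : B = g'' xss)
    (hApos : 0 < A) (hBpos : 0 < B)
    (h : ℝ → ℝ)
    (hh : ∀ x, h x = if x ≥ xss then g x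
      else g xss + (A^2 / B) * Real.log (A / B)
        - (A^2 / B) * Real.log (xss + A / B - x)) :
    ∃ h' h'' : ℝ → ℝ,
      (∀ x, HasDerivAt h (h' x) x) ∧
      (∀ x, HasDerivAt h' (h'' x) x) ∧
      (∀ x ≥ xss, h' x = g' x) ∧
      (∀ x ≤ xss, h' x = (A^2 / B) / (xss + A / B - x)) ∧
      (∀ x ≥ xss, h'' x = g'' x) ∧
      (∀ x ≤ xss, h'' x = (A^2 / B) / (xss + A / B - x)^2) ∧
      (∀ x ≤ xss, 0 < h' x ∧ h' x ≤ A) ∧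
      (∀ x ≤ xss, 0 < h'' x ∧ h'' x ≤ B) ∧
      Tendsto h atBot atBot := by
  have hAne : A ≠ 0 := ne_of_gt hApos
  have hBne : B ≠ 0 := ne_of_gt hBpos
  set C : ℝ := A ^ 2 / B with hCdef
  have hCpos : 0 < C := by positivity
  have hABpos : 0 < A / B := div_pos hApos hBpos
  have htpos : ∀ x ≤ xss, 0 < xss + A / B - x := fun x hx => by linarith
  -- the lower extension pieces
  set φ : ℝ → ℝ := fun x => g xss + C * Real.log (A / B) - C * Real.log (xss + A / B - x)
    with hφdef
  set p : ℝ → ℝ := fun x => C / (xss + A / B - x) with hpdef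
  set q : ℝ → ℝ := fun x => C / (xss + A / B - x) ^ 2 with hqdef
  have hCA : C / (A / B) = A := by
    rw [div_eq_iff (ne_of_gt hABpos), hCdef]
    field_simp
  have hCB : C / (A / B) ^ 2 = B := by
    rw [div_eq_iff (ne_of_gt (pow_pos hABpos 2)), hCdef]
    field_simp
  -- value agreement at xss
  have hts : xss + A / B - xss = A / B := by ring
  have hpxss : p xss = g' xss := by rw [← hA, hpdef]; simp only; rw [hts]; exact hCA
  have hqxss : q xss = g'' xss := by rw [← hB, hqdef]; simp only; rw [hts]; exact hCB
  have hφxss : φ xss = g xss := by simp [hφdef, hts]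
  -- h agrees with g on Set.Ici, with φ on Set.Iic
  have hEqg : ∀ x ≥ xss, h x = g x := fun x hx => by rw [hh x, if_pos hx]
  have hEqφ : ∀ x ≤ xss, h x = φ x := by
    intro x hx
    rcases lt_or_eq_of_le hx with hlt | rfl
    · rw [hh x, if_neg (not_le.mpr hlt)]
    · rw [hh x, if_pos le_rfl, hφxss]
  -- derivatives of φ and p where the argument is positive
  have hder_t : ∀ x : ℝ, HasDerivAt (fun y => xss + A / B - y) (-1) x := by
    intro x
    simpa using (hasDerivAt_id x).const_sub (xss + A / B)
  have hφd : ∀ x, 0 < xss + A / B - x → HasDerivAt φ (p x) x := by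
    intro x hx
    have h2 : HasDerivAt (fun y => Real.log (xss + A / B - y))
        ((xss + A / B - x)⁻¹ * (-1)) x :=
      (Real.hasDerivAt_log hx.ne').comp x (hder_t x)
    have h3 := (h2.const_mul C).const_sub (g xss + C * Real.log (A / B))
    have hval : p x = -(C * ((xss + A / B - x)⁻¹ * (-1))) := by
      rw [hpdef]; simp only; rw [div_eq_mul_inv]; ring
    rw [hval]
    exact h3
  have hpd : ∀ x, 0 < xss + A / B - x → HasDerivAt p (q x) x := by
    intro x hx
    have h2 : HasDerivAt (fun y => (xss + A / B - y)⁻¹)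
        (-(-1) / (xss + A / B - x) ^ 2) x := (hder_t x).inv hx.ne'
    have h3 := h2.const_mul C
    have hfun : p = fun y => C * (xss + A / B - y)⁻¹ := by
      funext y; rw [hpdef]; simp only [div_eq_mul_inv]
    have hval : q x = C * (-(-1) / (xss + A / B - x) ^ 2) := by
      rw [hqdef]; simp only; rw [neg_neg, mul_one_div]
    rw [hfun, hval]
    exact h3
  -- the candidate derivatives
  refine ⟨fun x => if x ≥ xss then g' x else p x,
          fun x => if x ≥ xss then g'' x else q x, ?_, ?_, ?_, ?_, ?_, ?_, ?_, ?_, ?_⟩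
  · -- h has derivative h'
    intro x
    beta_reduce
    rcases lt_trichotomy x xss with hlt | rfl | hgt
    · rw [if_neg (not_le.mpr hlt)]
      have hmem : Set.Iio xss ∈ nhds x := Iio_mem_nhds hlt
      refine (hφd x (htpos x hlt.le)).congr_of_eventuallyEq ?_
      filter_upwards [hmem] with y hy using hEqφ y (le_of_lt hy)
    · rw [if_pos le_rfl]
      have hleft : HasDerivWithinAt h (g' x) (Set.Iic x) x := by
        have h0 := (hφd x (htpos x le_rfl)).hasDerivWithinAt (s := Set.Iic x)
        rw [hpxss] at h0
        exact HasDerivWithinAt.congr h0 (fun y hy => hEqφ y hy) (hEqφ x le_rfl)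
      have hright : HasDerivWithinAt h (g' x) (Set.Ici x) x := by
        have h0 := (hgd x).hasDerivWithinAt (s := Set.Ici x)
        exact HasDerivWithinAt.congr h0 (fun y hy => hEqg y hy) (hEqg x le_rfl)
      have hu := hleft.union hright
      rw [Set.Iic_union_Ici] at hu
      exact hu.hasDerivAt Filter.univ_mem
    · rw [if_pos hgt.le]
      have hmem : Set.Ioi xss ∈ nhds x := Ioi_mem_nhds hgt
      refine (hgd x).congr_of_eventuallyEq ?_
      filter_upwards [hmem] with y hy using hEqg y (le_of_lt hy)
  · -- h' has derivative h''
    intro x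
    beta_reduce
    have hEq1 : ∀ y ≤ xss, (if y ≥ xss then g' y else p y) = p y := by
      intro y hy
      rcases lt_or_eq_of_le hy with hlt | rfl
      · rw [if_neg (not_le.mpr hlt)]
      · rw [if_pos le_rfl, hpxss]
    have hEq2 : ∀ y ≥ xss, (if y ≥ xss then g' y else p y) = g' y := fun y hy => if_pos hy
    rcases lt_trichotomy x xss with hlt | rfl | hgt
    · rw [if_neg (not_le.mpr hlt)]
      have hmem : Set.Iio xss ∈ nhds x := Iio_mem_nhds hlt
      refine (hpd x (htpos x hlt.le)).congr_of_eventuallyEq ?_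
      filter_upwards [hmem] with y hy
      exact hEq1 y (le_of_lt hy)
    · rw [if_pos le_rfl]
      have hleft : HasDerivWithinAt (fun y => if y ≥ x then g' y else p y)
          (g'' x) (Set.Iic x) x := by
        have h0 := (hpd x (htpos x le_rfl)).hasDerivWithinAt (s := Set.Iic x)
        rw [hqxss] at h0
        exact HasDerivWithinAt.congr h0 (fun y hy => hEq1 y hy) (hEq1 x le_rfl)
      have hright : HasDerivWithinAt (fun y => if y ≥ x then g' y else p y)
          (g'' x) (Set.Ici x) x := by
        have h0 := (hgd' x).hasDerivWithinAt (s := Set.Ici x)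
        exact HasDerivWithinAt.congr h0 (fun y hy => (hEq2 y hy)) (hEq2 x le_rfl)
      have hu := hleft.union hright
      rw [Set.Iic_union_Ici] at hu
      exact hu.hasDerivAt Filter.univ_mem
    · rw [if_pos hgt.le]
      have hmem : Set.Ioi xss ∈ nhds x := Ioi_mem_nhds hgt
      refine (hgd' x).congr_of_eventuallyEq ?_
      filter_upwards [hmem] with y hy
      exact if_pos (le_of_lt hy)
  · intro x hx; beta_reduce; rw [if_pos hx]
  · intro x hx
    beta_reduce
    rcases lt_or_eq_of_le hx with hlt | rfl
    · rw [if_neg (not_le.mpr hlt)]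
    · rw [if_pos le_rfl, ← hpxss]
  · intro x hx; beta_reduce; rw [if_pos hx]
  · intro x hx
    beta_reduce
    rcases lt_or_eq_of_le hx with hlt | rfl
    · rw [if_neg (not_le.mpr hlt)]
    · rw [if_pos le_rfl, ← hqxss]
  · -- bounds on h'
    intro x hx
    beta_reduce
    have htx := htpos x hx
    have hval : (if x ≥ xss then g' x else p x) = p x := by
      rcases lt_or_eq_of_le hx with hlt | rfl
      · rw [if_neg (not_le.mpr hlt)]
      · rw [if_pos le_rfl, hpxss]
    rw [hval]
    have hppos : 0 < p x := div_pos hCpos htx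
    refine ⟨hppos, ?_⟩
    have hle : A / B ≤ xss + A / B - x := by linarith
    calc p x = C / (xss + A / B - x) := rfl
      _ ≤ C / (A / B) := by
          apply div_le_div_of_nonneg_left hCpos.le hABpos hle
      _ = A := hCA
  · -- bounds on h''
    intro x hx
    beta_reduce
    have htx := htpos x hx
    have hval : (if x ≥ xss then g'' x else q x) = q x := by
      rcases lt_or_eq_of_le hx with hlt | rfl
      · rw [if_neg (not_le.mpr hlt)]
      · rw [if_pos le_rfl, hqxss]
    rw [hval]
    have hqpos : 0 < q x := div_pos hCpos (pow_pos htx 2)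
    refine ⟨hqpos, ?_⟩
    have hle : A / B ≤ xss + A / B - x := by linarith
    have hsq : (A / B) ^ 2 ≤ (xss + A / B - x) ^ 2 := by
      apply pow_le_pow_left₀ hABpos.le hle
    calc q x = C / (xss + A / B - x) ^ 2 := rfl
      _ ≤ C / (A / B) ^ 2 := by
          apply div_le_div_of_nonneg_left hCpos.le (pow_pos hABpos 2) hsq
      _ = B := hCB
  · -- tendsto atBot
    have hEv : h =ᶠ[atBot] φ := by
      filter_upwards [eventually_le_atBot xss] with x hx using hEqφ x hx
    have ht1 : Tendsto (fun x : ℝ => xss + A / B - x) atBot atTop := by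
      apply tendsto_atTop_add_const_left
      exact tendsto_neg_atBot_atTop
    have ht2 : Tendsto (fun x : ℝ => Real.log (xss + A / B - x)) atBot atTop :=
      Real.tendsto_log_atTop.comp ht1
    have ht3 : Tendsto (fun x : ℝ => C * Real.log (xss + A / B - x)) atBot atTop :=
      ht2.const_mul_atTop hCpos
    have ht5 : Tendsto (fun x : ℝ => -(C * Real.log (xss + A / B - x))) atBot atBot :=
      tendsto_neg_atTop_atBot.comp ht3
    have ht6 := tendsto_atBot_add_const_left atBot (g xss + C * Real.log (A / B)) ht5
    have ht4 : Tendsto φ atBot atBot := by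
      refine ht6.congr fun x => ?_
      rw [hφdef]; simp only; ring
    exact ht4.congr' hEv.symm
end

section
/- Let h : ℝ → ℝ be continuous and monotone nondecreasing with h(x) → +∞ as x → +∞ and h(x) → −∞ as x → −∞; let m_h(x) = ∫_0^x h(s) ds; let t ≥ 1, x_1, …, x_t ∈ [0,1]^d, y_1, …, y_t ∈ [0,1], and define H_h(θ) = ∑_{i=1}^t ( y_i·⟨x_i, θ⟩ − m_h(⟨x_i, θ⟩) ). Fix a coordinate j ∈ {1,…,d} such that (x_i)_j > 0 for at least one i, and fix θ ∈ ℝ^d. Then H_h(θ + s·e_j) → −∞ as s → +∞, where e_j is the j-th standard basis vector. -/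
open Filter

private lemma term_atBot (h : ℝ → ℝ) (hc : Continuous h) (htop : Tendsto h atTop atTop)
    (y a b : ℝ) (hb : 0 < b) :
    Tendsto (fun s : ℝ => y * (a + s * b) - ∫ u in (0:ℝ)..(a + s * b), h u) atTop atBot := by
  have hcs : Tendsto (fun s : ℝ => a + s * b) atTop atTop :=
    tendsto_atTop_add_const_left _ a (Tendsto.atTop_mul_const hb tendsto_id)
  obtain ⟨u0, hu0⟩ := eventually_atTop.mp (tendsto_atTop.mp htop (y + 1))
  set u1 : ℝ := max u0 0 with hu1
  have key : Tendsto (fun c : ℝ => (∫ u in (0:ℝ)..c, h u) - y * c) atTop atTop := by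
    have hL : Tendsto (fun c : ℝ => c + ((∫ u in (0:ℝ)..u1, h u) - u1 * (y + 1)))
        atTop atTop := tendsto_atTop_add_const_right _ _ tendsto_id
    refine tendsto_atTop_mono' atTop ?_ hL
    filter_upwards [eventually_ge_atTop u1] with c hcu
    have h1 : IntervalIntegrable h MeasureTheory.volume 0 u1 := hc.intervalIntegrable _ _
    have h2 : IntervalIntegrable h MeasureTheory.volume u1 c := hc.intervalIntegrable _ _
    have hsplit : (∫ u in (0:ℝ)..c, h u)
        = (∫ u in (0:ℝ)..u1, h u) + ∫ u in u1..c, h u :=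
      (intervalIntegral.integral_add_adjacent_intervals h1 h2).symm
    have hlow : (c - u1) * (y + 1) ≤ ∫ u in u1..c, h u := by
      have := intervalIntegral.integral_mono_on hcu
        (intervalIntegrable_const (c := y + 1)) h2
        (fun u hu => hu0 u (le_trans (le_max_left _ _) hu.1))
      rw [intervalIntegral.integral_const, smul_eq_mul] at this
      exact this
    have : (∫ u in (0:ℝ)..u1, h u) + (c - u1) * (y + 1) ≤ ∫ u in (0:ℝ)..c, h u := by
      rw [hsplit]; linarith
    nlinarith
  have := (tendsto_neg_atTop_atBot.comp key).comp hcs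
  refine this.congr fun s => ?_
  simp only [Function.comp_def]
  ring

private lemma sum_tendsto_atBot {ι : Type*} [DecidableEq ι] (s : Finset ι) (f : ι → ℝ → ℝ)
    (hbd : ∀ i, ∃ C, ∀ᶠ x in atTop, f i x ≤ C)
    (i0 : ι) (hi0 : i0 ∈ s) (h0 : Tendsto (f i0) atTop atBot) :
    Tendsto (fun x => ∑ i ∈ s, f i x) atTop atBot := by
  choose C hC using hbd
  have hev : ∀ᶠ x in atTop, ∀ i ∈ s.erase i0, f i x ≤ C i :=
    (eventually_all_finset _).2 fun i _ => hC i
  have hg : Tendsto (fun x => f i0 x + ∑ i ∈ s.erase i0, C i) atTop atBot :=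
    tendsto_atBot_add_const_right _ _ h0
  refine tendsto_atBot_mono' atTop ?_ hg
  filter_upwards [hev] with xx hxx
  rw [← Finset.add_sum_erase s _ hi0]
  exact add_le_add le_rfl (Finset.sum_le_sum hxx)

/-- coordinate-wise coercivity of the pseudo log-likelihood. If h is
continuous, monotone nondecreasing, and unbounded in both directions, features lie in
[0,1]^d, outcomes in [0,1], and coordinate j has (x_i)_j > 0 for some i, then for any
fixed θ, H_h(θ + s·e_j) → −∞ as s → +∞, where e_j is the j-th standard basis vector. -/
theorem stmt_14 (d t : ℕ) (ht : 1 ≤ t)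
    (h : ℝ → ℝ) (hc : Continuous h) (hmono : Monotone h)
    (htop : Tendsto h atTop atTop) (hbot : Tendsto h atBot atBot)
    (x : Fin t → Fin d → ℝ) (hx : ∀ i k, x i k ∈ Set.Icc (0:ℝ) 1)
    (y : Fin t → ℝ) (hy : ∀ i, y i ∈ Set.Icc (0:ℝ) 1)
    (H : (Fin d → ℝ) → ℝ)
    (hH : ∀ θ : Fin d → ℝ, H θ = ∑ i, (y i * (∑ k, x i k * θ k)
      - ∫ u in (0:ℝ)..(∑ k, x i k * θ k), h u))
    (j : Fin d) (hj : ∃ i, 0 < x i j)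
    (e : Fin d → ℝ) (he : e = Pi.single j (1:ℝ))
    (θ : Fin d → ℝ) :
    Tendsto (fun s : ℝ => H (θ + s • e)) atTop atBot := by
  have hinner : ∀ (i : Fin t) (s : ℝ),
      (∑ k, x i k * (θ + s • e) k) = (∑ k, x i k * θ k) + s * x i j := by
    intro i s
    subst he
    simp only [Pi.add_apply, Pi.smul_apply, smul_eq_mul, mul_add, Finset.sum_add_distrib,
      Pi.single_apply, mul_ite, mul_one, mul_zero]
    congr 1
    rw [Finset.sum_ite_eq' Finset.univ j (fun k => x i k * s)]
    simp [mul_comm]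
  set f : Fin t → ℝ → ℝ := fun i s =>
    y i * ((∑ k, x i k * θ k) + s * x i j)
      - ∫ u in (0:ℝ)..((∑ k, x i k * θ k) + s * x i j), h u with hf
  have heq : (fun s : ℝ => H (θ + s • e)) = fun s => ∑ i, f i s := by
    funext s
    rw [hH]
    exact Finset.sum_congr rfl fun i _ => by rw [hinner i s]
  rw [heq]
  obtain ⟨i0, hi0⟩ := hj
  have hbd : ∀ i, ∃ C, ∀ᶠ s in atTop, f i s ≤ C := by
    intro i
    rcases lt_or_eq_of_le (hx i j).1 with hpos | hzero
    · exact ⟨0, (term_atBot h hc htop _ _ _ hpos).eventually (eventually_le_atBot 0)⟩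
    · exact ⟨f i 0, Eventually.of_forall fun s => by simp [hf, ← hzero]⟩
  exact sum_tendsto_atBot Finset.univ f hbd i0 (Finset.mem_univ i0)
    (term_atBot h hc htop _ _ _ hi0)
end

section
/- Let h : ℝ → ℝ be continuous and monotone nondecreasing with h(x) → +∞ as x → +∞ and h(x) → −∞ as x → −∞; let m_h(x) = ∫_0^x h(s) ds; let t ≥ 1, x_1, …, x_t ∈ [0,1]^d, and y_1, …, y_t ∈ [0,1]. Then the function H_h(θ) = ∑_{i=1}^t ( y_i·⟨x_i, θ⟩ − m_h(⟨x_i, θ⟩) ) attains a global maximum: there exists θ̂ ∈ ℝ^d such that H_h(θ) ≤ H_h(θ̂) for all θ ∈ ℝ^d. -/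
/-!
Since `h` is unbounded in both directions, its primitive `m_h` grows superlinearly at `±∞`, so
each summand `s ↦ y s - m_h s` is continuous, bounded above and tends to `-∞` at infinity. Hence
`z ↦ ∑ᵢ (yᵢ zᵢ - m_h zᵢ)` tends to `-∞` along the cocompact filter of `ℝᵗ`, and so does its
restriction to the (closed, finite-dimensional) range of `θ ↦ (⟨xᵢ, θ⟩)ᵢ`, where it therefore
attains its maximum.
-/

open Filter Set intervalIntegral MeasureTheory

theorem tendsto_primitive_sub_mul_atTop {h : ℝ → ℝ} (hc : Continuous h)
    (htop : Tendsto h atTop atTop) (c : ℝ) :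
    Tendsto (fun s => (∫ u in (0:ℝ)..s, h u) - c * s) atTop atTop := by
  obtain ⟨A, hA⟩ := eventually_atTop.mp (htop.eventually (eventually_ge_atTop (c + 1)))
  have hbound : ∀ s ≥ A, s + ((∫ u in (0:ℝ)..A, h u) - (c + 1) * A) ≤
      (∫ u in (0:ℝ)..s, h u) - c * s := by
    intro s hs
    have hsplit := integral_add_adjacent_intervals (hc.intervalIntegrable (μ := volume) 0 A)
      (hc.intervalIntegrable A s)
    have hlow : (s - A) * (c + 1) ≤ ∫ u in A..s, h u := by
      simpa only [intervalIntegral.integral_const, smul_eq_mul] using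
        integral_mono_on hs (intervalIntegrable_const (μ := volume)) (hc.intervalIntegrable A s)
          fun u hu => hA u hu.1
    linarith
  exact tendsto_atTop_mono' _ (eventually_atTop.mpr ⟨A, hbound⟩)
    (tendsto_atTop_add_const_right _ _ tendsto_id)

theorem tendsto_primitive_sub_mul_atBot {h : ℝ → ℝ} (hc : Continuous h)
    (hbot : Tendsto h atBot atBot) (c : ℝ) :
    Tendsto (fun s => (∫ u in (0:ℝ)..s, h u) - c * s) atBot atTop := by
  -- reflect: `∫ u in 0..-r, h u = ∫ u in 0..r, -h (-u)`
  have hneg : Tendsto (fun u => -h (-u)) atTop atTop :=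
    tendsto_neg_atBot_atTop.comp (hbot.comp tendsto_neg_atTop_atBot)
  have key := (tendsto_primitive_sub_mul_atTop (hc.comp continuous_neg).neg hneg (-c)).comp
    tendsto_neg_atBot_atTop
  refine key.congr fun s => ?_
  simp only [Function.comp_apply, Pi.neg_apply, intervalIntegral.integral_neg, integral_comp_neg,
    neg_zero, neg_neg, integral_symm 0 s]
  ring

theorem tendsto_mul_sub_primitive_cocompact {h : ℝ → ℝ} (hc : Continuous h)
    (htop : Tendsto h atTop atTop) (hbot : Tendsto h atBot atBot) (c : ℝ) :
    Tendsto (fun s => c * s - ∫ u in (0:ℝ)..s, h u) (cocompact ℝ) atBot := by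
  rw [cocompact_eq_atBot_atTop, tendsto_sup]
  constructor
  · exact (tendsto_neg_atTop_atBot.comp (tendsto_primitive_sub_mul_atBot hc hbot c)).congr
      fun s => neg_sub _ _
  · exact (tendsto_neg_atTop_atBot.comp (tendsto_primitive_sub_mul_atTop hc htop c)).congr
      fun s => neg_sub _ _

theorem tendsto_sum_apply_cocompact_atBot {ι : Type*} [Fintype ι]
    {X : ι → Type*} [∀ i, TopologicalSpace (X i)] {g : ∀ i, X i → ℝ}
    (hg : ∀ i, Tendsto (g i) (cocompact (X i)) atBot) (hbdd : ∀ i, BddAbove (range (g i))) :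
    Tendsto (fun z : ∀ i, X i => ∑ i, g i (z i)) (cocompact (∀ i, X i)) atBot := by
  classical
  choose C hC using hbdd
  rw [← coprodᵢ_cocompact, Filter.coprodᵢ, tendsto_iSup]
  intro i
  have hlim : Tendsto (fun z : ∀ i, X i => g i (z i) + ∑ j ∈ Finset.univ.erase i, C j)
      (comap (Function.eval i) (cocompact (X i))) atBot :=
    tendsto_atBot_add_const_right _ _ ((hg i).comp tendsto_comap)
  refine tendsto_atBot_mono (fun z => ?_) hlim
  rw [← Finset.add_sum_erase _ _ (Finset.mem_univ i)]
  gcongr with j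
  exact hC j (mem_range_self _)

theorem exists_forall_ge_comp_linearMap {𝕜 E V : Type*} [NontriviallyNormedField 𝕜]
    [CompleteSpace 𝕜] [NormedAddCommGroup E] [NormedSpace 𝕜 E] [AddCommGroup V] [Module 𝕜 V]
    [FiniteDimensional 𝕜 V] (Φ : V →ₗ[𝕜] E) {F : E → ℝ} (hF : Continuous F)
    (hFco : Tendsto F (cocompact E) atBot) : ∃ v₀, ∀ v, F (Φ v) ≤ F (Φ v₀) := by
  have hemb := (LinearMap.range Φ).closed_of_finiteDimensional.isClosedEmbedding_subtypeVal
  obtain ⟨w₀, hw₀⟩ := (hF.comp continuous_subtype_val).exists_forall_ge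
    (hFco.comp hemb.tendsto_cocompact)
  obtain ⟨v₀, hv₀⟩ := LinearMap.mem_range.mp w₀.2
  exact ⟨v₀, fun v => hv₀ ▸ hw₀ ⟨Φ v, LinearMap.mem_range_self Φ v⟩⟩

theorem stmt_15_general (d t : ℕ)
    (h : ℝ → ℝ) (hc : Continuous h)
    (htop : Tendsto h atTop atTop) (hbot : Tendsto h atBot atBot)
    (x : Fin t → Fin d → ℝ)
    (y : Fin t → ℝ)
    (H : (Fin d → ℝ) → ℝ)
    (hH : ∀ θ : Fin d → ℝ, H θ = ∑ i, (y i * (∑ k, x i k * θ k)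
      - ∫ u in (0:ℝ)..(∑ k, x i k * θ k), h u)) :
    ∃ θhat : Fin d → ℝ, ∀ θ : Fin d → ℝ, H θ ≤ H θhat := by
  set g : Fin t → ℝ → ℝ := fun i s => y i * s - ∫ u in (0:ℝ)..s, h u
  have hg_cont : ∀ i, Continuous (g i) := fun i =>
    (continuous_const.mul continuous_id).sub (continuous_primitive hc.intervalIntegrable 0)
  have hg_lim : ∀ i, Tendsto (g i) (cocompact ℝ) atBot := fun i =>
    tendsto_mul_sub_primitive_cocompact hc htop hbot (y i)
  have hg_bdd : ∀ i, BddAbove (range (g i)) := fun i =>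
    let ⟨s, hs⟩ := (hg_cont i).exists_forall_ge (hg_lim i)
    ⟨g i s, forall_mem_range.2 hs⟩
  obtain ⟨θhat, hθhat⟩ := exists_forall_ge_comp_linearMap (Matrix.mulVecLin x)
    (F := fun z => ∑ i, g i (z i))
    (continuous_finsetSum _ fun i _ => (hg_cont i).comp (continuous_apply i))
    (tendsto_sum_apply_cocompact_atBot hg_lim hg_bdd)
  refine ⟨θhat, fun θ => ?_⟩
  rw [hH, hH]
  exact hθhat θ

/-- if h is continuous, monotone nondecreasing, and unbounded in both
directions, features lie in [0,1]^d and outcomes in [0,1], then the pseudo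
log-likelihood H_h attains a global maximum on ℝ^d. -/
theorem stmt_15 (d t : ℕ) (ht : 1 ≤ t)
    (h : ℝ → ℝ) (hc : Continuous h) (hmono : Monotone h)
    (htop : Tendsto h atTop atTop) (hbot : Tendsto h atBot atBot)
    (x : Fin t → Fin d → ℝ) (hx : ∀ i k, x i k ∈ Set.Icc (0:ℝ) 1)
    (y : Fin t → ℝ) (hy : ∀ i, y i ∈ Set.Icc (0:ℝ) 1)
    (H : (Fin d → ℝ) → ℝ)
    (hH : ∀ θ : Fin d → ℝ, H θ = ∑ i, (y i * (∑ k, x i k * θ k)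
      - ∫ u in (0:ℝ)..(∑ k, x i k * θ k), h u)) :
    ∃ θhat : Fin d → ℝ, ∀ θ : Fin d → ℝ, H θ ≤ H θhat :=
  stmt_15_general d t h hc htop hbot x y H hH
end

section
/- Let μ : ℝ → ℝ be twice differentiable with μ'(x) > 0 for all x ∈ ℝ, μ'(x) ≤ L for all x, and |μ''(x)| ≤ M for all x, where L, M > 0. Then for any reals a ≤ b there exists a function h : ℝ → ℝ which is twice differentiable on ℝ and satisfies: (i) h(x) = μ(x) for all x ∈ [a, b]; (ii) h'(x) > 0 for all x ∈ ℝ (h is strictly increasing); (iii) h'(x) ≤ L and |h''(x)| ≤ M for all x ∈ ℝ; (iv) h(x) → +∞ as x → +∞; and (v) h(x) → −∞ as x → −∞. -/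
/-!
The corrected link is `h x = μ a + ∫ t in a..x, μ' (P t)`, where `P` is a soft clamp: the
identity on `[a, b]`, continued by arctan tails, so that `P` is differentiable with `|P'| ≤ 1`
and has bounded range. Then `h = μ` on `[a, b]`, `h' = μ' ∘ P ≤ L`, and `h'' = μ''(P) · P'`
is bounded by `M`. Since the range of `P` is compact, `h'` is bounded below by a positive
constant, so `h` grows at least linearly in both directions.
-/

open Filter Set Topology

noncomputable def softCap (t : ℝ) : ℝ := if t ≤ 0 then t else Real.arctan t

lemma softCap_of_nonpos {t : ℝ} (ht : t ≤ 0) : softCap t = t := if_pos ht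

lemma softCap_of_nonneg {t : ℝ} (ht : 0 ≤ t) : softCap t = Real.arctan t := by
  rcases ht.eq_or_lt with rfl | ht
  · simp [softCap]
  · exact if_neg ht.not_ge

lemma softCap_lt_pi_div_two (t : ℝ) : softCap t < Real.pi / 2 := by
  rcases le_total t 0 with ht | ht
  · rw [softCap_of_nonpos ht]; linarith [Real.pi_pos]
  · rw [softCap_of_nonneg ht]; exact Real.arctan_lt_pi_div_two t

lemma min_le_softCap (t : ℝ) : min t 0 ≤ softCap t := by
  rcases le_total t 0 with ht | ht
  · rw [softCap_of_nonpos ht]; exact min_le_left _ _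
  · rw [softCap_of_nonneg ht, min_eq_right ht]; exact Real.arctan_nonneg.mpr ht

lemma hasDerivAt_softCap (t : ℝ) : HasDerivAt softCap (1 + max t 0 ^ 2)⁻¹ t := by
  rcases lt_trichotomy t 0 with ht | rfl | ht
  · have hid : softCap =ᶠ[𝓝 t] id := by
      filter_upwards [eventually_lt_nhds ht] with s hs using softCap_of_nonpos hs.le
    simpa [max_eq_right ht.le] using (hasDerivAt_id t).congr_of_eventuallyEq hid
  · have left : HasDerivWithinAt softCap 1 (Iic 0) 0 :=
      (hasDerivAt_id 0).hasDerivWithinAt.congr (fun s hs => softCap_of_nonpos hs)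
        (softCap_of_nonpos le_rfl)
    have right : HasDerivWithinAt softCap 1 (Ici 0) 0 := by
      simpa using ((Real.hasDerivAt_arctan 0).hasDerivWithinAt (s := Ici 0)).congr
        (fun s hs => softCap_of_nonneg hs) (softCap_of_nonneg le_rfl)
    simpa [Iic_union_Ici, hasDerivWithinAt_univ] using left.union right
  · have harctan : softCap =ᶠ[𝓝 t] Real.arctan := by
      filter_upwards [eventually_gt_nhds ht] with s hs using softCap_of_nonneg hs.le
    simpa [max_eq_left ht.le] using (Real.hasDerivAt_arctan t).congr_of_eventuallyEq harctan

lemma inv_one_add_sq_le_one (t : ℝ) : (1 + t ^ 2)⁻¹ ≤ 1 :=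
  inv_le_one_of_one_le₀ (le_add_of_nonneg_right (sq_nonneg t))

noncomputable def softClamp (a b x : ℝ) : ℝ := a - softCap (a - (b + softCap (x - b)))

section softClamp

variable {a b : ℝ}

lemma softClamp_of_mem {x : ℝ} (hx : x ∈ Icc a b) : softClamp a b x = x := by
  rw [softClamp, softCap_of_nonpos (sub_nonpos.2 hx.2), add_sub_cancel,
    softCap_of_nonpos (sub_nonpos.2 hx.1), sub_sub_cancel]

lemma softClamp_mem (hab : a ≤ b) (x : ℝ) :
    softClamp a b x ∈ Icc (a - Real.pi / 2) (b + Real.pi / 2) := by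
  set y := b + softCap (x - b)
  have hy : y < b + Real.pi / 2 := by linarith [softCap_lt_pi_div_two (x - b)]
  have hmin : a - b - Real.pi / 2 ≤ min (a - y) 0 :=
    le_min (by linarith) (by linarith [Real.pi_pos])
  change a - softCap (a - y) ∈ _
  constructor <;> linarith [softCap_lt_pi_div_two (a - y), min_le_softCap (a - y)]

lemma hasDerivAt_softClamp (x : ℝ) :
    HasDerivAt (softClamp a b)
      ((1 + max (a - (b + softCap (x - b))) 0 ^ 2)⁻¹ * (1 + max (x - b) 0 ^ 2)⁻¹) x := by
  have hupper := ((hasDerivAt_softCap (x - b)).comp x ((hasDerivAt_id x).sub_const b)).const_add b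
  have hlower := ((hasDerivAt_softCap _).comp x (hupper.const_sub a)).const_sub a
  change HasDerivAt (fun x => a - softCap (a - (b + softCap (x - b)))) _ x
  simpa using hlower

lemma differentiable_softClamp : Differentiable ℝ (softClamp a b) :=
  fun x => (hasDerivAt_softClamp x).differentiableAt

lemma abs_deriv_softClamp_le_one (x : ℝ) : |deriv (softClamp a b) x| ≤ 1 := by
  rw [(hasDerivAt_softClamp x).deriv, abs_of_nonneg (by positivity)]
  exact mul_le_one₀ (inv_one_add_sq_le_one _) (by positivity) (inv_one_add_sq_le_one _)

end softClamp

section GrowthOfDerivLowerBound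

variable {f : ℝ → ℝ} {ε : ℝ}

lemma tendsto_atTop_atTop_of_le_deriv (hf : Differentiable ℝ f) (hε : 0 < ε)
    (hf' : ∀ x, ε ≤ deriv f x) : Tendsto f atTop atTop := by
  refine tendsto_atTop_mono' _ ?_
    (tendsto_atTop_add_const_left _ (f 0) (tendsto_id.const_mul_atTop hε))
  filter_upwards [eventually_ge_atTop 0] with x hx
  dsimp only [id]
  linarith [mul_sub_le_image_sub_of_le_deriv hf hf' hx]

lemma tendsto_atBot_atBot_of_le_deriv (hf : Differentiable ℝ f) (hε : 0 < ε)
    (hf' : ∀ x, ε ≤ deriv f x) : Tendsto f atBot atBot := by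
  refine tendsto_atBot_mono' _ ?_
    (tendsto_atBot_add_const_left _ (f 0) (tendsto_id.const_mul_atBot hε))
  filter_upwards [eventually_le_atBot 0] with x hx
  dsimp only [id]
  linarith [mul_sub_le_image_sub_of_le_deriv hf hf' hx]

end GrowthOfDerivLowerBound

lemma IsCompact.exists_pos_le_comp {α β : Type*} [TopologicalSpace β] {g : β → ℝ} {φ : α → β}
    {s : Set β} (hs : IsCompact s) (hg : Continuous g) (hpos : ∀ y, 0 < g y)
    (hφ : ∀ x, φ x ∈ s) [Nonempty α] : ∃ ε > 0, ∀ x, ε ≤ g (φ x) := by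
  obtain ⟨y, -, hy⟩ := hs.exists_isMinOn ⟨_, hφ (Classical.arbitrary α)⟩ hg.continuousOn
  exact ⟨g y, hpos y, fun x => hy (hφ x)⟩

noncomputable def correctedLink (μ : ℝ → ℝ) (a b x : ℝ) : ℝ :=
  μ a + ∫ t in a..x, deriv μ (softClamp a b t)

section correctedLink

variable {μ : ℝ → ℝ} {a b : ℝ}

lemma hasDerivAt_correctedLink (hμ' : Continuous (deriv μ)) (x : ℝ) :
    HasDerivAt (correctedLink μ a b) (deriv μ (softClamp a b x)) x :=
  ((hμ'.comp differentiable_softClamp.continuous).integral_hasStrictDerivAt a x).hasDerivAt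
    |>.const_add (μ a)

lemma deriv_correctedLink (hμ' : Continuous (deriv μ)) :
    deriv (correctedLink μ a b) = deriv μ ∘ softClamp a b :=
  funext fun x => (hasDerivAt_correctedLink hμ' x).deriv

lemma differentiable_correctedLink (hμ' : Continuous (deriv μ)) :
    Differentiable ℝ (correctedLink μ a b) := fun x =>
  (hasDerivAt_correctedLink hμ' x).differentiableAt

lemma correctedLink_eq_of_mem (hμ : Differentiable ℝ μ) (hμ' : Continuous (deriv μ)) {x : ℝ}
    (hx : x ∈ Icc a b) : correctedLink μ a b x = μ x := by
  have hclamp : EqOn (fun t => deriv μ (softClamp a b t)) (deriv μ) (uIcc a x) := by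
    intro t ht
    rw [uIcc_of_le hx.1] at ht
    simp only [softClamp_of_mem ⟨ht.1, ht.2.trans hx.2⟩]
  rw [correctedLink, intervalIntegral.integral_congr hclamp,
    intervalIntegral.integral_deriv_eq_sub (fun t _ => hμ t) (hμ'.intervalIntegrable a x)]
  ring

lemma differentiable_deriv_correctedLink (hμ' : Differentiable ℝ (deriv μ)) :
    Differentiable ℝ (deriv (correctedLink μ a b)) := by
  rw [deriv_correctedLink hμ'.continuous]
  exact hμ'.comp differentiable_softClamp

lemma abs_deriv_deriv_correctedLink_le (hμ' : Differentiable ℝ (deriv μ)) {M : ℝ}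
    (hM : ∀ x, |deriv (deriv μ) x| ≤ M) (x : ℝ) :
    |deriv (deriv (correctedLink μ a b)) x| ≤ M := by
  rw [deriv_correctedLink hμ'.continuous, deriv_comp x (hμ' _) (differentiable_softClamp x),
    abs_mul]
  simpa using mul_le_mul (hM _) (abs_deriv_softClamp_le_one x) (abs_nonneg _)
    ((abs_nonneg _).trans (hM 0))

end correctedLink

theorem stmt_17_general (μ : ℝ → ℝ)
    (hd1 : ∀ x, DifferentiableAt ℝ μ x)
    (hd2 : ∀ x, DifferentiableAt ℝ (deriv μ) x)
    (L M : ℝ)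
    (hpos : ∀ x, 0 < deriv μ x)
    (hLb : ∀ x, deriv μ x ≤ L)
    (hMb : ∀ x, |deriv (deriv μ) x| ≤ M)
    (a b : ℝ) (hab : a ≤ b) :
    ∃ h : ℝ → ℝ,
      (∀ x, DifferentiableAt ℝ h x) ∧
      (∀ x, DifferentiableAt ℝ (deriv h) x) ∧
      (∀ x ∈ Set.Icc a b, h x = μ x) ∧
      (∀ x, 0 < deriv h x) ∧
      StrictMono h ∧
      (∀ x, deriv h x ≤ L) ∧
      (∀ x, |deriv (deriv h) x| ≤ M) ∧
      Tendsto h atTop atTop ∧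
      Tendsto h atBot atBot := by
  have hμ' : Continuous (deriv μ) := Differentiable.continuous hd2
  have hderiv := deriv_correctedLink (a := a) (b := b) hμ'
  have hdiff := differentiable_correctedLink (a := a) (b := b) hμ'
  obtain ⟨ε, hε, hεle⟩ :=
    isCompact_Icc.exists_pos_le_comp hμ' hpos (softClamp_mem hab)
  have hlower : ∀ x, ε ≤ deriv (correctedLink μ a b) x := by simpa [hderiv] using hεle
  have hderiv_pos : ∀ x, 0 < deriv (correctedLink μ a b) x := fun x => hε.trans_le (hlower x)
  exact ⟨correctedLink μ a b, hdiff, differentiable_deriv_correctedLink hd2,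
    fun x hx => correctedLink_eq_of_mem hd1 hμ' hx, hderiv_pos,
    strictMono_of_deriv_pos hderiv_pos, by simpa [hderiv] using fun x => hLb _,
    abs_deriv_deriv_correctedLink_le hd2 hMb,
    tendsto_atTop_atTop_of_le_deriv hdiff hε hlower,
    tendsto_atBot_atBot_of_le_deriv hdiff hε hlower⟩

/-- construction of the corrected link function. If μ is twice
differentiable with 0 < μ' ≤ L and |μ''| ≤ M everywhere, then for any a ≤ b there is a
twice differentiable h agreeing with μ on [a,b], strictly increasing with h' > 0,
satisfying the same derivative bounds, and tending to +∞ at +∞ and −∞ at −∞. -/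
theorem stmt_17 (μ : ℝ → ℝ)
    (hd1 : ∀ x, DifferentiableAt ℝ μ x)
    (hd2 : ∀ x, DifferentiableAt ℝ (deriv μ) x)
    (L M : ℝ) (hL : 0 < L) (hM : 0 < M)
    (hpos : ∀ x, 0 < deriv μ x)
    (hLb : ∀ x, deriv μ x ≤ L)
    (hMb : ∀ x, |deriv (deriv μ) x| ≤ M)
    (a b : ℝ) (hab : a ≤ b) :
    ∃ h : ℝ → ℝ,
      (∀ x, DifferentiableAt ℝ h x) ∧
      (∀ x, DifferentiableAt ℝ (deriv h) x) ∧
      (∀ x ∈ Set.Icc a b, h x = μ x) ∧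
      (∀ x, 0 < deriv h x) ∧
      StrictMono h ∧
      (∀ x, deriv h x ≤ L) ∧
      (∀ x, |deriv (deriv h) x| ≤ M) ∧
      Tendsto h atTop atTop ∧
      Tendsto h atBot atBot :=
  stmt_17_general μ hd1 hd2 L M hpos hLb hMb a b hab
end
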